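/- arXiv:1206.5669 — 5 statements merged into one kernel-verified Lean document; each statement's English description precedes it below -/
import Mathlib

section
/- For every positive integer n and every 2-coloring c of the pairs (i,j) with 1 ≤ i < j ≤ n, the following identity holds: cr(c) = 3·binom(n,4) − Σ_{k=0}^{⌊n/2⌋−1} k·(n−2−k)·E_k(c). -/
/-- Number of crossings of a 2-page book drawing of `K n`, encoded as a
2-coloring `c` of the pairs `(i,j)` with `1 ≤ i < j ≤ n` (edge `ij` is drawn in the
page given by `c i j`).  Edges `(i,j)` and `(k,l)` cross iff `i < k < j < l` and
they have the same color. -/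
def crossings (n : ℕ) (c : ℕ → ℕ → Bool) : ℕ :=
  ((((Finset.Icc 1 n) ×ˢ (Finset.Icc 1 n)) ×ˢ ((Finset.Icc 1 n) ×ˢ (Finset.Icc 1 n))).filter
    (fun p => p.1.1 < p.2.1 ∧ p.2.1 < p.1.2 ∧ p.1.2 < p.2.2 ∧
      c p.1.1 p.1.2 = c p.2.1 p.2.2)).card

/-- The Hill/Guy quantity `Z n = (1/4)⌊n/2⌋⌊(n-1)/2⌋⌊(n-2)/2⌋⌊(n-3)/2⌋`. -/
def Z (n : ℕ) : ℕ := (n / 2) * ((n - 1) / 2) * ((n - 2) / 2) * ((n - 3) / 2) / 4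

/-- `s(i,j)`: the number of `l < i` with `c l j = c i j` plus the number of
`j < l ≤ n` with `c i l = c i j`. -/
def sDeg (n : ℕ) (c : ℕ → ℕ → Bool) (i j : ℕ) : ℕ :=
  ((Finset.Ico 1 i).filter (fun l => c l j = c i j)).card +
  ((Finset.Ioc j n).filter (fun l => c i l = c i j)).card

/-- The edge `(i,j)` is a `kVal n c i j`-edge: `min (s(i,j), n - 2 - s(i,j))`. -/
def kVal (n : ℕ) (c : ℕ → ℕ → Bool) (i j : ℕ) : ℕ :=
  min (sDeg n c i j) (n - 2 - sDeg n c i j)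

/-- `E_k(c)`: the number of `k`-edges of `c`. -/
def Ek (n : ℕ) (c : ℕ → ℕ → Bool) (k : ℕ) : ℕ :=
  (((Finset.Icc 1 n) ×ˢ (Finset.Icc 1 n)).filter
    (fun p => p.1 < p.2 ∧ kVal n c p.1 p.2 = k)).card

/-- `E_{≤k}(c) = Σ_{j=0}^{k} E_j(c)`. -/
def Eleq (n : ℕ) (c : ℕ → ℕ → Bool) (k : ℕ) : ℕ :=
  ∑ j ∈ Finset.range (k + 1), Ek n c j

/-- `E_{≤≤k}(c) = Σ_{j=0}^{k} E_{≤j}(c)`. -/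
def Eleqleq (n : ℕ) (c : ℕ → ℕ → Bool) (k : ℕ) : ℕ :=
  ∑ j ∈ Finset.range (k + 1), Eleq n c j

/-- `E_{≤k}(c, c₁)`: the number of `(c,c₁)`-invariant `(≤ k)`-edges, where `c₁` is the
restriction of `c` to `K_{n-1}` (deleting the rightmost vertex `n`): edges `(i,j)` with
`j ≤ n - 1` that are `j'`-edges of both `c` (in `K_n`) and `c₁` (in `K_{n-1}`) for some `j' ≤ k`. -/
def EleqInv (n : ℕ) (c : ℕ → ℕ → Bool) (k : ℕ) : ℕ :=
  (((Finset.Icc 1 (n - 1)) ×ˢ (Finset.Icc 1 (n - 1))).filter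
    (fun p => p.1 < p.2 ∧ kVal n c p.1 p.2 = kVal (n - 1) c p.1 p.2 ∧
      kVal n c p.1 p.2 ≤ k)).card

/-- A 2-coloring is crossing optimal if it minimizes the number of crossings. -/
def IsOptimal (n : ℕ) (c : ℕ → ℕ → Bool) : Prop :=
  ∀ c' : ℕ → ℕ → Bool, crossings n c ≤ crossings n c'

/-- The spine convention: the edges `(i,i+1)` and the edge `(1,n)` are blue (`true`). -/
def SpineConvention (n : ℕ) (c : ℕ → ℕ → Bool) : Prop :=
  (∀ i, 1 ≤ i → i + 1 ≤ n → c i (i + 1) = true) ∧ c 1 n = true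

/-- The cyclic-shift transformation `f`. -/
def fT (n : ℕ) (c : ℕ → ℕ → Bool) : ℕ → ℕ → Bool :=
  fun i j => if j < n then c (i + 1) (j + 1) else c 1 (i + 1)

/-- The vertical-reflection transformation `g`. -/
def gT (n : ℕ) (c : ℕ → ℕ → Bool) : ℕ → ℕ → Bool :=
  fun i j => c (n + 1 - j) (n + 1 - i)

/-- The page-exchange transformation `h` (keeping the spine edges and `(1,n)` fixed). -/
def hT (n : ℕ) (c : ℕ → ℕ → Bool) : ℕ → ℕ → Bool :=
  fun i j => if j = i + 1 ∨ (i = 1 ∧ j = n) then c i j else !(c i j)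

/-- Two colorings are equivalent if `c' = h^a ∘ g^b ∘ f^m (c)` for some
`a, b ∈ {0,1}` and `0 ≤ m ≤ n - 1`. -/
def EquivCol (n : ℕ) (c c' : ℕ → ℕ → Bool) : Prop :=
  ∃ (a b : Bool) (m : ℕ), m ≤ n - 1 ∧
    ∀ i j, 1 ≤ i → i < j → j ≤ n →
      c' i j = (if a then hT n else id) ((if b then gT n else id) ((fT n)^[m] c)) i j

/-- The position (starting from 1) of the entry `(i,l)` in the order associated to the
entry `(i,j)`: first all entries `(i,l')`, `i < l' < j`, with `c i l' ≠ c i j` in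
decreasing order of `l'`, then all entries with `c i l' = c i j` in increasing order. -/
def orderPos (c : ℕ → ℕ → Bool) (i j l : ℕ) : ℕ :=
  if c i l ≠ c i j then
    ((Finset.Ioo i j).filter (fun l' => l ≤ l' ∧ c i l' ≠ c i j)).card
  else
    ((Finset.Ioo i j).filter (fun l' => c i l' ≠ c i j)).card +
    ((Finset.Ioo i j).filter (fun l' => l' ≤ l ∧ c i l' = c i j)).card

/-- The edge `(i,j)` (with `i < j`) is crossed by some other edge of the drawing. -/
def Crossed (n : ℕ) (c : ℕ → ℕ → Bool) (i j : ℕ) : Prop :=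
  ∃ k l, 1 ≤ k ∧ k < l ∧ l ≤ n ∧
    ((i < k ∧ k < j ∧ j < l ∧ c i j = c k l) ∨
     (k < i ∧ i < l ∧ l < j ∧ c i j = c k l))

section CrossingIdentityAux

open Finset

private def ind (p : Prop) [Decidable p] : ℕ := if p then 1 else 0

private lemma ind_def (p : Prop) [Decidable p] : ind p = if p then 1 else 0 := rfl

/-- hockey-stick helper -/
private lemma Hstick (m y k : ℕ) :
    (∑ x ∈ Finset.Icc 1 m, if y < x then (m - x).choose k else 0)
      = (m - y).choose (k + 1) := by
  rw [← Finset.sum_filter]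
  by_cases hym : y < m
  · have hfil : (Finset.Icc 1 m).filter (fun x => y < x) = Finset.Icc (y+1) m := by
      ext z
      simp only [Finset.mem_filter, Finset.mem_Icc]
      omega
    rw [hfil]
    have hbij : ∑ x ∈ Finset.Icc (y+1) m, (m - x).choose k
        = ∑ t ∈ Finset.Icc 0 (m - y - 1), t.choose k := by
      apply Finset.sum_nbij' (fun x => m - x) (fun t => m - t)
      · intro a ha; simp only [Finset.mem_Icc] at *; omega
      · intro a ha; simp only [Finset.mem_Icc] at *; omega
      · intro a ha; simp only [Finset.mem_Icc] at *; omega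
      · intro a ha; simp only [Finset.mem_Icc] at *; omega
      · intro a ha; rfl
    rw [hbij]
    have hsub : ∑ t ∈ Finset.Icc 0 (m - y - 1), t.choose k
        = ∑ t ∈ Finset.Icc k (m - y - 1), t.choose k := by
      symm
      apply Finset.sum_subset
      · intro t ht; simp only [Finset.mem_Icc] at *; omega
      · intro t ht hnt
        simp only [Finset.mem_Icc] at ht hnt
        exact Nat.choose_eq_zero_of_lt (by omega)
    rw [hsub, Nat.sum_Icc_choose]
    congr 1
    omega
  · have hfil : (Finset.Icc 1 m).filter (fun x => y < x) = ∅ := by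
      ext z
      simp only [Finset.mem_filter, Finset.mem_Icc, Finset.notMem_empty, iff_false, not_and]
      omega
    rw [hfil, Finset.sum_empty]
    have : m - y = 0 := by omega
    rw [this, Nat.choose_eq_zero_of_lt (by omega)]

private lemma count_sorted (n : ℕ) :
    (∑ a ∈ Finset.Icc 1 n, ∑ b ∈ Finset.Icc 1 n, ∑ x ∈ Finset.Icc 1 n, ∑ y ∈ Finset.Icc 1 n,
      ind (a < b ∧ b < x ∧ x < y)) = n.choose 4 := by
  have hy : ∀ a b x : ℕ, (∑ y ∈ Finset.Icc 1 n, ind (a < b ∧ b < x ∧ x < y))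
      = if a < b ∧ b < x then (n - x).choose 1 else 0 := by
    intro a b x
    by_cases h : a < b ∧ b < x
    · rw [if_pos h, ← Hstick n x 0]
      apply Finset.sum_congr rfl
      intro y _
      by_cases hxy : x < y
      · simp [ind, h.1, h.2, hxy]
      · simp [ind, hxy]
    · rw [if_neg h]
      apply Finset.sum_eq_zero
      intro y _
      simp only [ind, ite_eq_right_iff]
      intro hc
      exact absurd ⟨hc.1, hc.2.1⟩ h
  have hx : ∀ a b : ℕ, (∑ x ∈ Finset.Icc 1 n, if a < b ∧ b < x then (n - x).choose 1 else 0)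
      = if a < b then (n - b).choose 2 else 0 := by
    intro a b
    by_cases h : a < b
    · rw [if_pos h, ← Hstick n b 1]
      apply Finset.sum_congr rfl
      intro x _
      by_cases hbx : b < x
      · simp [h, hbx]
      · simp [hbx]
    · rw [if_neg h]
      apply Finset.sum_eq_zero
      intro x _
      rw [if_neg (fun hc => h hc.1)]
  have hb : ∀ a : ℕ, (∑ b ∈ Finset.Icc 1 n, if a < b then (n - b).choose 2 else 0)
      = (n - a).choose 3 := fun a => Hstick n a 2
  calc (∑ a ∈ Finset.Icc 1 n, ∑ b ∈ Finset.Icc 1 n, ∑ x ∈ Finset.Icc 1 n, ∑ y ∈ Finset.Icc 1 n,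
      ind (a < b ∧ b < x ∧ x < y))
      = ∑ a ∈ Finset.Icc 1 n, (n - a).choose 3 := by
        apply Finset.sum_congr rfl; intro a _
        rw [← hb a]
        apply Finset.sum_congr rfl; intro b _
        rw [← hx a b]
        apply Finset.sum_congr rfl; intro x _
        exact hy a b x
    _ = ∑ a ∈ Finset.Icc 1 n, if 0 < a then (n - a).choose 3 else 0 := by
        apply Finset.sum_congr rfl; intro a ha
        simp only [Finset.mem_Icc] at ha
        rw [if_pos (by omega)]
    _ = (n - 0).choose 4 := Hstick n 0 3
    _ = n.choose 4 := by rw [Nat.sub_zero]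

private lemma sw12 (s : Finset ℕ) (t : ℕ → ℕ → ℕ → ℕ → ℕ) :
    (∑ a ∈ s, ∑ b ∈ s, ∑ x ∈ s, ∑ y ∈ s, t a b x y)
      = ∑ a ∈ s, ∑ b ∈ s, ∑ x ∈ s, ∑ y ∈ s, t b a x y :=
  Finset.sum_comm

private lemma sw23 (s : Finset ℕ) (t : ℕ → ℕ → ℕ → ℕ → ℕ) :
    (∑ a ∈ s, ∑ b ∈ s, ∑ x ∈ s, ∑ y ∈ s, t a b x y)
      = ∑ a ∈ s, ∑ b ∈ s, ∑ x ∈ s, ∑ y ∈ s, t a x b y :=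
  Finset.sum_congr rfl fun _ _ => Finset.sum_comm

private lemma sw34 (s : Finset ℕ) (t : ℕ → ℕ → ℕ → ℕ → ℕ) :
    (∑ a ∈ s, ∑ b ∈ s, ∑ x ∈ s, ∑ y ∈ s, t a b x y)
      = ∑ a ∈ s, ∑ b ∈ s, ∑ x ∈ s, ∑ y ∈ s, t a b y x :=
  Finset.sum_congr rfl fun _ _ => Finset.sum_congr rfl fun _ _ => Finset.sum_comm

private lemma p1 (s : Finset ℕ) (t : ℕ → ℕ → ℕ → ℕ → ℕ) :
    (∑ a ∈ s, ∑ b ∈ s, ∑ x ∈ s, ∑ y ∈ s, t a b x y)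
      = ∑ a ∈ s, ∑ b ∈ s, ∑ x ∈ s, ∑ y ∈ s, t b y a x :=
  ((sw23 s t).trans (sw12 s fun a b x y => t a x b y)).trans
    (sw34 s fun a b x y => t b x a y)

private lemma p2 (s : Finset ℕ) (t : ℕ → ℕ → ℕ → ℕ → ℕ) :
    (∑ a ∈ s, ∑ b ∈ s, ∑ x ∈ s, ∑ y ∈ s, t a b x y)
      = ∑ a ∈ s, ∑ b ∈ s, ∑ x ∈ s, ∑ y ∈ s, t x y a b :=
  (p1 s t).trans (sw23 s fun a b x y => t b y a x)

private lemma p3 (s : Finset ℕ) (t : ℕ → ℕ → ℕ → ℕ → ℕ) :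
    (∑ a ∈ s, ∑ b ∈ s, ∑ x ∈ s, ∑ y ∈ s, t a b x y)
      = ∑ a ∈ s, ∑ b ∈ s, ∑ x ∈ s, ∑ y ∈ s, t x y b a :=
  (p2 s t).trans (sw12 s fun a b x y => t x y a b)

private lemma p4 (s : Finset ℕ) (t : ℕ → ℕ → ℕ → ℕ → ℕ) :
    (∑ a ∈ s, ∑ b ∈ s, ∑ x ∈ s, ∑ y ∈ s, t a b x y)
      = ∑ a ∈ s, ∑ b ∈ s, ∑ x ∈ s, ∑ y ∈ s, t b x a y :=
  (sw23 s t).trans (sw12 s fun a b x y => t a x b y)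

private lemma p5 (s : Finset ℕ) (t : ℕ → ℕ → ℕ → ℕ → ℕ) :
    (∑ a ∈ s, ∑ b ∈ s, ∑ x ∈ s, ∑ y ∈ s, t a b x y)
      = ∑ a ∈ s, ∑ b ∈ s, ∑ x ∈ s, ∑ y ∈ s, t a x y b :=
  (sw34 s t).trans (sw23 s fun a b x y => t a b y x)

private lemma p6 (s : Finset ℕ) (t : ℕ → ℕ → ℕ → ℕ → ℕ) :
    (∑ a ∈ s, ∑ b ∈ s, ∑ x ∈ s, ∑ y ∈ s, t a b x y)
      = ∑ a ∈ s, ∑ b ∈ s, ∑ x ∈ s, ∑ y ∈ s, t b x y a :=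
  (p5 s t).trans (sw12 s fun a b x y => t a x y b)

private lemma m1 {i j x y : ℕ} {P : Prop} [Decidable P] :
    ind (i < j) * (ind (x < i ∧ P) * ind (i < y ∧ y < j))
      = ind (x < i ∧ i < y ∧ y < j) * ind P := by
  by_cases hP : P <;> simp only [ind, hP, and_true, and_false, if_false, if_true] <;>
    split_ifs <;> omega

private lemma m2 {i j x y : ℕ} {P Q : Prop} [Decidable P] [Decidable Q]
    (hne : P → ¬Q → x ≠ y) :
    ind (i < j) * (ind (x < i ∧ P) * ind (y < i ∧ ¬Q))
      = ind (x < y ∧ y < i ∧ i < j) * ind (P ∧ ¬Q)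
        + ind (y < x ∧ x < i ∧ i < j) * ind (P ∧ ¬Q) := by
  by_cases hP : P <;> by_cases hQ : Q <;>
    simp only [ind, hP, hQ, not_true, not_false_iff, and_true, and_false, if_false, if_true]
  · split_ifs <;> omega
  · have hxy := hne hP hQ
    split_ifs <;> omega
  · split_ifs <;> omega
  · split_ifs <;> omega

private lemma m3 {i j x y : ℕ} {P Q : Prop} [Decidable P] [Decidable Q] :
    ind (i < j) * (ind (x < i ∧ P) * ind (j < y ∧ ¬Q))
      = ind (x < i ∧ i < j ∧ j < y) * ind (P ∧ ¬Q) := by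
  by_cases hP : P <;> by_cases hQ : Q <;>
    simp only [ind, hP, hQ, not_true, not_false_iff, and_true, and_false, if_false, if_true] <;>
    split_ifs <;> omega

private lemma m4 {i j x y : ℕ} {P : Prop} [Decidable P] :
    ind (i < j) * (ind (j < x ∧ P) * ind (i < y ∧ y < j))
      = ind (i < y ∧ y < j ∧ j < x) * ind P := by
  by_cases hP : P <;> simp only [ind, hP, and_true, and_false, if_false, if_true] <;>
    split_ifs <;> omega

private lemma m5 {i j x y : ℕ} {P Q : Prop} [Decidable P] [Decidable Q] :
    ind (i < j) * (ind (j < x ∧ P) * ind (y < i ∧ ¬Q))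
      = ind (y < i ∧ i < j ∧ j < x) * ind (P ∧ ¬Q) := by
  by_cases hP : P <;> by_cases hQ : Q <;>
    simp only [ind, hP, hQ, not_true, not_false_iff, and_true, and_false, if_false, if_true] <;>
    split_ifs <;> omega

private lemma m6 {i j x y : ℕ} {P Q : Prop} [Decidable P] [Decidable Q]
    (hne : P → ¬Q → x ≠ y) :
    ind (i < j) * (ind (j < x ∧ P) * ind (j < y ∧ ¬Q))
      = ind (i < j ∧ j < x ∧ x < y) * ind (P ∧ ¬Q)
        + ind (i < j ∧ j < y ∧ y < x) * ind (P ∧ ¬Q) := by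
  by_cases hP : P <;> by_cases hQ : Q <;>
    simp only [ind, hP, hQ, not_true, not_false_iff, and_true, and_false, if_false, if_true]
  · split_ifs <;> omega
  · have hxy := hne hP hQ
    split_ifs <;> omega
  · split_ifs <;> omega
  · split_ifs <;> omega

end CrossingIdentityAux

section CrossingIdentityAux2

open Finset

private lemma sDeg_le (n : ℕ) (c : ℕ → ℕ → Bool) {i j : ℕ}
    (hi : 1 ≤ i) (hij : i < j) (hj : j ≤ n) : sDeg n c i j ≤ n - 2 := by
  have h1 := Finset.card_filter_le (Finset.Ico 1 i) (fun l => c l j = c i j)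
  have h2 := Finset.card_filter_le (Finset.Ioc j n) (fun l => c i l = c i j)
  rw [Nat.card_Ico] at h1
  rw [Nat.card_Ioc] at h2
  rw [sDeg]
  omega

private lemma sDeg_sum (n : ℕ) (c : ℕ → ℕ → Bool) {i j : ℕ}
    (hi : 1 ≤ i) (hij : i < j) (hj : j ≤ n) :
    sDeg n c i j = ∑ x ∈ Finset.Icc 1 n,
      (ind (x < i ∧ c x j = c i j) + ind (j < x ∧ c i x = c i j)) := by
  rw [Finset.sum_add_distrib, sDeg]
  have h1 : (Finset.Icc 1 n).filter (fun x => x < i ∧ c x j = c i j)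
      = (Finset.Ico 1 i).filter (fun l => c l j = c i j) := by
    ext z
    simp only [Finset.mem_filter, Finset.mem_Icc, Finset.mem_Ico]
    constructor
    · rintro ⟨⟨z1, _⟩, z3, z4⟩; exact ⟨⟨z1, z3⟩, z4⟩
    · rintro ⟨⟨z1, z3⟩, z4⟩; exact ⟨⟨z1, by omega⟩, z3, z4⟩
  have h2 : (Finset.Icc 1 n).filter (fun x => j < x ∧ c i x = c i j)
      = (Finset.Ioc j n).filter (fun l => c i l = c i j) := by
    ext z
    simp only [Finset.mem_filter, Finset.mem_Icc, Finset.mem_Ioc]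
    constructor
    · rintro ⟨⟨_, z2⟩, z3, z4⟩; exact ⟨⟨z3, z2⟩, z4⟩
    · rintro ⟨⟨z3, z2⟩, z4⟩; exact ⟨⟨by omega, z2⟩, z3, z4⟩
  rw [← h1, ← h2, Finset.card_filter, Finset.card_filter]
  rfl

private lemma sDeg_compl (n : ℕ) (c : ℕ → ℕ → Bool) {i j : ℕ}
    (hi : 1 ≤ i) (hij : i < j) (hj : j ≤ n) :
    (∑ y ∈ Finset.Icc 1 n, (ind (i < y ∧ y < j)
        + (ind (y < i ∧ ¬(c y j = c i j)) + ind (j < y ∧ ¬(c i y = c i j)))))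
      = n - 2 - sDeg n c i j := by
  have hpoint : ∀ y, 1 ≤ y → y ≤ n →
      ((ind (y < i ∧ c y j = c i j) + ind (j < y ∧ c i y = c i j))
        + (ind (i < y ∧ y < j)
          + (ind (y < i ∧ ¬(c y j = c i j)) + ind (j < y ∧ ¬(c i y = c i j)))))
      = ind (¬(y = i) ∧ ¬(y = j)) := by
    intro y hy1 hy2
    by_cases h3 : c y j = c i j <;> by_cases h4 : c i y = c i j <;>
      simp only [ind, h3, h4, not_true, not_false_iff, and_true, and_false, if_false, if_true] <;>
      split_ifs <;> omega
  have htot : (∑ y ∈ Finset.Icc 1 n,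
      ((ind (y < i ∧ c y j = c i j) + ind (j < y ∧ c i y = c i j))
        + (ind (i < y ∧ y < j)
          + (ind (y < i ∧ ¬(c y j = c i j)) + ind (j < y ∧ ¬(c i y = c i j)))))) = n - 2 := by
    rw [Finset.sum_congr rfl (fun y hy => by
      simp only [Finset.mem_Icc] at hy
      exact hpoint y hy.1 hy.2)]
    have hcf : (∑ y ∈ Finset.Icc 1 n, ind (¬(y = i) ∧ ¬(y = j)))
        = ((Finset.Icc 1 n).filter (fun y => ¬(y = i) ∧ ¬(y = j))).card := by
      rw [Finset.card_filter]
      rfl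
    rw [hcf]
    have hset : (Finset.Icc 1 n).filter (fun y => ¬(y = i) ∧ ¬(y = j))
        = ((Finset.Icc 1 n).erase i).erase j := by
      ext z
      simp only [Finset.mem_filter, Finset.mem_erase, Finset.mem_Icc]
      tauto
    rw [hset, Finset.card_erase_of_mem, Finset.card_erase_of_mem, Nat.card_Icc]
    · omega
    · simp only [Finset.mem_Icc]; omega
    · simp only [Finset.mem_erase, Finset.mem_Icc]
      exact ⟨by omega, by omega⟩
  rw [Finset.sum_add_distrib] at htot
  rw [← sDeg_sum n c hi hij hj] at htot
  omega

private lemma G_decomp (c : ℕ → ℕ → Bool) (i j x y : ℕ) :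
    ind (i < j) * ((ind (x < i ∧ c x j = c i j) + ind (j < x ∧ c i x = c i j)) *
      (ind (i < y ∧ y < j)
        + (ind (y < i ∧ ¬(c y j = c i j)) + ind (j < y ∧ ¬(c i y = c i j)))))
    = ind (x < i ∧ i < y ∧ y < j) * ind (c x j = c i j)
      + (ind (x < y ∧ y < i ∧ i < j) * ind (c x j = c i j ∧ ¬(c y j = c i j))
      + (ind (y < x ∧ x < i ∧ i < j) * ind (c x j = c i j ∧ ¬(c y j = c i j))
      + (ind (x < i ∧ i < j ∧ j < y) * ind (c x j = c i j ∧ ¬(c i y = c i j))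
      + (ind (i < y ∧ y < j ∧ j < x) * ind (c i x = c i j)
      + (ind (y < i ∧ i < j ∧ j < x) * ind (c i x = c i j ∧ ¬(c y j = c i j))
      + (ind (i < j ∧ j < x ∧ x < y) * ind (c i x = c i j ∧ ¬(c i y = c i j))
      + ind (i < j ∧ j < y ∧ y < x) * ind (c i x = c i j ∧ ¬(c i y = c i j)))))))) := by
  have e2 := m2 (i := i) (j := j) (x := x) (y := y)
    (P := c x j = c i j) (Q := c y j = c i j) (fun hp hq heq => hq (heq ▸ hp))
  have e6 := m6 (i := i) (j := j) (x := x) (y := y)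
    (P := c i x = c i j) (Q := c i y = c i j) (fun hp hq heq => hq (heq ▸ hp))
  calc ind (i < j) * ((ind (x < i ∧ c x j = c i j) + ind (j < x ∧ c i x = c i j)) *
      (ind (i < y ∧ y < j)
        + (ind (y < i ∧ ¬(c y j = c i j)) + ind (j < y ∧ ¬(c i y = c i j)))))
      = ind (i < j) * (ind (x < i ∧ c x j = c i j) * ind (i < y ∧ y < j))
        + (ind (i < j) * (ind (x < i ∧ c x j = c i j) * ind (y < i ∧ ¬(c y j = c i j)))
        + (ind (i < j) * (ind (x < i ∧ c x j = c i j) * ind (j < y ∧ ¬(c i y = c i j)))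
        + (ind (i < j) * (ind (j < x ∧ c i x = c i j) * ind (i < y ∧ y < j))
        + (ind (i < j) * (ind (j < x ∧ c i x = c i j) * ind (y < i ∧ ¬(c y j = c i j)))
        + ind (i < j) * (ind (j < x ∧ c i x = c i j) * ind (j < y ∧ ¬(c i y = c i j))))))) := by
        ring
    _ = _ := by
        rw [m1, e2, m3, m4, m5, e6]
        ring

private lemma point_id (c : ℕ → ℕ → Bool) (a b x y : ℕ) :
    ind (a < b ∧ b < x ∧ x < y ∧ c a x = c b y)
    + (ind (a < b ∧ b < x ∧ x < y) * ind (c a y = c b y)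
      + (ind (a < b ∧ b < x ∧ x < y) * ind (c a y = c x y ∧ ¬(c b y = c x y))
      + (ind (a < b ∧ b < x ∧ x < y) * ind (c b y = c x y ∧ ¬(c a y = c x y))
      + (ind (a < b ∧ b < x ∧ x < y) * ind (c a x = c b x ∧ ¬(c b y = c b x))
      + (ind (a < b ∧ b < x ∧ x < y) * ind (c a y = c a x)
      + (ind (a < b ∧ b < x ∧ x < y) * ind (c b y = c b x ∧ ¬(c a x = c b x))
      + (ind (a < b ∧ b < x ∧ x < y) * ind (c a x = c a b ∧ ¬(c a y = c a b))
      + ind (a < b ∧ b < x ∧ x < y) * ind (c a y = c a b ∧ ¬(c a x = c a b)))))))))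
    = 3 * ind (a < b ∧ b < x ∧ x < y) := by
  by_cases h : a < b ∧ b < x ∧ x < y
  · obtain ⟨h1, h2, h3⟩ := h
    simp only [ind, h1, h2, h3, true_and, and_true, if_true]
    cases hab : c a b <;> cases hax : c a x <;> cases hay : c a y <;>
      cases hbx : c b x <;> cases hby : c b y <;> cases hxy : c x y <;>
      simp_all
  · have h0 : ind (a < b ∧ b < x ∧ x < y) = 0 := if_neg h
    have h0' : ind (a < b ∧ b < x ∧ x < y ∧ c a x = c b y) = 0 :=
      if_neg (fun hh => h ⟨hh.1, hh.2.1, hh.2.2.1⟩)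
    simp only [h0, h0', zero_mul, mul_zero, add_zero, zero_add]

end CrossingIdentityAux2

/-- `cr(c) = 3·C(n,4) − Σ_{k=0}^{⌊n/2⌋−1} k (n−2−k) E_k(c)`. -/
theorem crossings_eq_kEdge_identity (n : ℕ) (hn : 1 ≤ n) (c : ℕ → ℕ → Bool) :
    (crossings n c : ℤ) =
      3 * (n.choose 4 : ℤ) -
        ∑ k ∈ Finset.range (n / 2), (k : ℤ) * ((n : ℤ) - 2 - (k : ℤ)) * (Ek n c k : ℤ) := by
  classical
  have hcross : crossings n c
      = ∑ a ∈ Finset.Icc 1 n, ∑ b ∈ Finset.Icc 1 n, ∑ x ∈ Finset.Icc 1 n, ∑ y ∈ Finset.Icc 1 n,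
          ind (a < b ∧ b < x ∧ x < y ∧ c a x = c b y) := by
    unfold crossings
    rw [Finset.card_filter, Finset.sum_product]
    simp only [Finset.sum_product]
    exact sw23 (Finset.Icc 1 n) (fun a b x y => ind (a < x ∧ x < b ∧ b < y ∧ c a b = c x y))
  have lc : (∑ k ∈ Finset.range (n / 2), k * (n - 2 - k) * Ek n c k)
      = ∑ i ∈ Finset.Icc 1 n, ∑ j ∈ Finset.Icc 1 n,
          if i < j then sDeg n c i j * (n - 2 - sDeg n c i j) else 0 := by
    have hmaps : ∀ p ∈ (Finset.Icc 1 n ×ˢ Finset.Icc 1 n).filter (fun p : ℕ × ℕ => p.1 < p.2),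
        kVal n c p.1 p.2 ∈ Finset.range (n / 2) := by
      intro p hp
      rw [Finset.mem_filter, Finset.mem_product, Finset.mem_Icc, Finset.mem_Icc] at hp
      obtain ⟨⟨⟨hi1, _⟩, _, hj2⟩, hij⟩ := hp
      have hle := sDeg_le n c hi1 hij hj2
      rw [Finset.mem_range, kVal]
      omega
    calc (∑ k ∈ Finset.range (n / 2), k * (n - 2 - k) * Ek n c k)
        = ∑ k ∈ Finset.range (n / 2),
            ∑ p ∈ ((Finset.Icc 1 n ×ˢ Finset.Icc 1 n).filter
                (fun p : ℕ × ℕ => p.1 < p.2)).filter (fun p => kVal n c p.1 p.2 = k),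
              kVal n c p.1 p.2 * (n - 2 - kVal n c p.1 p.2) := by
          apply Finset.sum_congr rfl
          intro k _
          have hEk : Ek n c k = (((Finset.Icc 1 n ×ˢ Finset.Icc 1 n).filter
              (fun p : ℕ × ℕ => p.1 < p.2)).filter (fun p => kVal n c p.1 p.2 = k)).card := by
            rw [Ek, Finset.filter_filter]
          symm
          calc (∑ p ∈ ((Finset.Icc 1 n ×ˢ Finset.Icc 1 n).filter
                (fun p : ℕ × ℕ => p.1 < p.2)).filter (fun p => kVal n c p.1 p.2 = k),
                kVal n c p.1 p.2 * (n - 2 - kVal n c p.1 p.2))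
              = ∑ p ∈ ((Finset.Icc 1 n ×ˢ Finset.Icc 1 n).filter
                (fun p : ℕ × ℕ => p.1 < p.2)).filter (fun p => kVal n c p.1 p.2 = k),
                k * (n - 2 - k) :=
              Finset.sum_congr rfl (fun p hp => by
                rw [Finset.mem_filter] at hp
                rw [hp.2])
            _ = (((Finset.Icc 1 n ×ˢ Finset.Icc 1 n).filter
                (fun p : ℕ × ℕ => p.1 < p.2)).filter
                  (fun p => kVal n c p.1 p.2 = k)).card • (k * (n - 2 - k)) :=
              Finset.sum_const _
            _ = k * (n - 2 - k) * Ek n c k := by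
              rw [hEk, smul_eq_mul, mul_comm]
      _ = ∑ p ∈ (Finset.Icc 1 n ×ˢ Finset.Icc 1 n).filter (fun p : ℕ × ℕ => p.1 < p.2),
            kVal n c p.1 p.2 * (n - 2 - kVal n c p.1 p.2) :=
          Finset.sum_fiberwise_of_maps_to hmaps _
      _ = ∑ p ∈ (Finset.Icc 1 n ×ˢ Finset.Icc 1 n).filter (fun p : ℕ × ℕ => p.1 < p.2),
            sDeg n c p.1 p.2 * (n - 2 - sDeg n c p.1 p.2) := by
          apply Finset.sum_congr rfl
          intro p hp
          rw [Finset.mem_filter, Finset.mem_product, Finset.mem_Icc, Finset.mem_Icc] at hp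
          obtain ⟨⟨⟨hi1, _⟩, _, hj2⟩, hij⟩ := hp
          have hle := sDeg_le n c hi1 hij hj2
          rcases Nat.le_total (sDeg n c p.1 p.2) (n - 2 - sDeg n c p.1 p.2) with h | h
          · rw [kVal, min_eq_left h]
          · rw [kVal, min_eq_right h]
            have hx : n - 2 - (n - 2 - sDeg n c p.1 p.2) = sDeg n c p.1 p.2 := by omega
            rw [hx, Nat.mul_comm]
      _ = ∑ p ∈ (Finset.Icc 1 n ×ˢ Finset.Icc 1 n),
            if p.1 < p.2 then sDeg n c p.1 p.2 * (n - 2 - sDeg n c p.1 p.2) else 0 :=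
          Finset.sum_filter _ _
      _ = ∑ i ∈ Finset.Icc 1 n, ∑ j ∈ Finset.Icc 1 n,
            if i < j then sDeg n c i j * (n - 2 - sDeg n c i j) else 0 :=
          Finset.sum_product _ _ _
  have hA : (∑ i ∈ Finset.Icc 1 n, ∑ j ∈ Finset.Icc 1 n,
        if i < j then sDeg n c i j * (n - 2 - sDeg n c i j) else 0)
      = ∑ i ∈ Finset.Icc 1 n, ∑ j ∈ Finset.Icc 1 n, ∑ x ∈ Finset.Icc 1 n, ∑ y ∈ Finset.Icc 1 n,
          ind (i < j) * ((ind (x < i ∧ c x j = c i j) + ind (j < x ∧ c i x = c i j)) *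
            (ind (i < y ∧ y < j)
              + (ind (y < i ∧ ¬(c y j = c i j)) + ind (j < y ∧ ¬(c i y = c i j))))) := by
    apply Finset.sum_congr rfl
    intro i hi
    apply Finset.sum_congr rfl
    intro j hj
    simp only [Finset.mem_Icc] at hi hj
    by_cases hij : i < j
    · rw [if_pos hij, ← sDeg_compl n c hi.1 hij hj.2, sDeg_sum n c hi.1 hij hj.2,
        Finset.sum_mul_sum]
      apply Finset.sum_congr rfl
      intro x _
      apply Finset.sum_congr rfl
      intro y _
      rw [show ind (i < j) = 1 from if_pos hij, one_mul]
    · rw [if_neg hij]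
      symm
      apply Finset.sum_eq_zero
      intro x _
      apply Finset.sum_eq_zero
      intro y _
      rw [show ind (i < j) = 0 from if_neg hij, zero_mul]
  have hB : (∑ i ∈ Finset.Icc 1 n, ∑ j ∈ Finset.Icc 1 n, ∑ x ∈ Finset.Icc 1 n,
        ∑ y ∈ Finset.Icc 1 n,
          ind (i < j) * ((ind (x < i ∧ c x j = c i j) + ind (j < x ∧ c i x = c i j)) *
            (ind (i < y ∧ y < j)
              + (ind (y < i ∧ ¬(c y j = c i j)) + ind (j < y ∧ ¬(c i y = c i j))))))
      = ∑ i ∈ Finset.Icc 1 n, ∑ j ∈ Finset.Icc 1 n, ∑ x ∈ Finset.Icc 1 n, ∑ y ∈ Finset.Icc 1 n,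
          (ind (x < i ∧ i < y ∧ y < j) * ind (c x j = c i j)
          + (ind (x < y ∧ y < i ∧ i < j) * ind (c x j = c i j ∧ ¬(c y j = c i j))
          + (ind (y < x ∧ x < i ∧ i < j) * ind (c x j = c i j ∧ ¬(c y j = c i j))
          + (ind (x < i ∧ i < j ∧ j < y) * ind (c x j = c i j ∧ ¬(c i y = c i j))
          + (ind (i < y ∧ y < j ∧ j < x) * ind (c i x = c i j)
          + (ind (y < i ∧ i < j ∧ j < x) * ind (c i x = c i j ∧ ¬(c y j = c i j))
          + (ind (i < j ∧ j < x ∧ x < y) * ind (c i x = c i j ∧ ¬(c i y = c i j))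
          + ind (i < j ∧ j < y ∧ y < x) * ind (c i x = c i j ∧ ¬(c i y = c i j))))))))) := by
    apply Finset.sum_congr rfl
    intro i _
    apply Finset.sum_congr rfl
    intro j _
    apply Finset.sum_congr rfl
    intro x _
    apply Finset.sum_congr rfl
    intro y _
    exact G_decomp c i j x y
  have r1 : (∑ i ∈ Finset.Icc 1 n, ∑ j ∈ Finset.Icc 1 n, ∑ x ∈ Finset.Icc 1 n,
        ∑ y ∈ Finset.Icc 1 n, ind (x < i ∧ i < y ∧ y < j) * ind (c x j = c i j))
      = ∑ a ∈ Finset.Icc 1 n, ∑ b ∈ Finset.Icc 1 n, ∑ x ∈ Finset.Icc 1 n, ∑ y ∈ Finset.Icc 1 n,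
          ind (a < b ∧ b < x ∧ x < y) * ind (c a y = c b y) :=
    p1 (Finset.Icc 1 n) (fun i j x y => ind (x < i ∧ i < y ∧ y < j) * ind (c x j = c i j))
  have r2 : (∑ i ∈ Finset.Icc 1 n, ∑ j ∈ Finset.Icc 1 n, ∑ x ∈ Finset.Icc 1 n,
        ∑ y ∈ Finset.Icc 1 n,
          ind (x < y ∧ y < i ∧ i < j) * ind (c x j = c i j ∧ ¬(c y j = c i j)))
      = ∑ a ∈ Finset.Icc 1 n, ∑ b ∈ Finset.Icc 1 n, ∑ x ∈ Finset.Icc 1 n, ∑ y ∈ Finset.Icc 1 n,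
          ind (a < b ∧ b < x ∧ x < y) * ind (c a y = c x y ∧ ¬(c b y = c x y)) :=
    p2 (Finset.Icc 1 n)
      (fun i j x y => ind (x < y ∧ y < i ∧ i < j) * ind (c x j = c i j ∧ ¬(c y j = c i j)))
  have r3 : (∑ i ∈ Finset.Icc 1 n, ∑ j ∈ Finset.Icc 1 n, ∑ x ∈ Finset.Icc 1 n,
        ∑ y ∈ Finset.Icc 1 n,
          ind (y < x ∧ x < i ∧ i < j) * ind (c x j = c i j ∧ ¬(c y j = c i j)))
      = ∑ a ∈ Finset.Icc 1 n, ∑ b ∈ Finset.Icc 1 n, ∑ x ∈ Finset.Icc 1 n, ∑ y ∈ Finset.Icc 1 n,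
          ind (a < b ∧ b < x ∧ x < y) * ind (c b y = c x y ∧ ¬(c a y = c x y)) :=
    p3 (Finset.Icc 1 n)
      (fun i j x y => ind (y < x ∧ x < i ∧ i < j) * ind (c x j = c i j ∧ ¬(c y j = c i j)))
  have r4 : (∑ i ∈ Finset.Icc 1 n, ∑ j ∈ Finset.Icc 1 n, ∑ x ∈ Finset.Icc 1 n,
        ∑ y ∈ Finset.Icc 1 n,
          ind (x < i ∧ i < j ∧ j < y) * ind (c x j = c i j ∧ ¬(c i y = c i j)))
      = ∑ a ∈ Finset.Icc 1 n, ∑ b ∈ Finset.Icc 1 n, ∑ x ∈ Finset.Icc 1 n, ∑ y ∈ Finset.Icc 1 n,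
          ind (a < b ∧ b < x ∧ x < y) * ind (c a x = c b x ∧ ¬(c b y = c b x)) :=
    p4 (Finset.Icc 1 n)
      (fun i j x y => ind (x < i ∧ i < j ∧ j < y) * ind (c x j = c i j ∧ ¬(c i y = c i j)))
  have r5 : (∑ i ∈ Finset.Icc 1 n, ∑ j ∈ Finset.Icc 1 n, ∑ x ∈ Finset.Icc 1 n,
        ∑ y ∈ Finset.Icc 1 n, ind (i < y ∧ y < j ∧ j < x) * ind (c i x = c i j))
      = ∑ a ∈ Finset.Icc 1 n, ∑ b ∈ Finset.Icc 1 n, ∑ x ∈ Finset.Icc 1 n, ∑ y ∈ Finset.Icc 1 n,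
          ind (a < b ∧ b < x ∧ x < y) * ind (c a y = c a x) :=
    p5 (Finset.Icc 1 n) (fun i j x y => ind (i < y ∧ y < j ∧ j < x) * ind (c i x = c i j))
  have r6 : (∑ i ∈ Finset.Icc 1 n, ∑ j ∈ Finset.Icc 1 n, ∑ x ∈ Finset.Icc 1 n,
        ∑ y ∈ Finset.Icc 1 n,
          ind (y < i ∧ i < j ∧ j < x) * ind (c i x = c i j ∧ ¬(c y j = c i j)))
      = ∑ a ∈ Finset.Icc 1 n, ∑ b ∈ Finset.Icc 1 n, ∑ x ∈ Finset.Icc 1 n, ∑ y ∈ Finset.Icc 1 n,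
          ind (a < b ∧ b < x ∧ x < y) * ind (c b y = c b x ∧ ¬(c a x = c b x)) :=
    p6 (Finset.Icc 1 n)
      (fun i j x y => ind (y < i ∧ i < j ∧ j < x) * ind (c i x = c i j ∧ ¬(c y j = c i j)))
  have r8 : (∑ i ∈ Finset.Icc 1 n, ∑ j ∈ Finset.Icc 1 n, ∑ x ∈ Finset.Icc 1 n,
        ∑ y ∈ Finset.Icc 1 n,
          ind (i < j ∧ j < y ∧ y < x) * ind (c i x = c i j ∧ ¬(c i y = c i j)))
      = ∑ a ∈ Finset.Icc 1 n, ∑ b ∈ Finset.Icc 1 n, ∑ x ∈ Finset.Icc 1 n, ∑ y ∈ Finset.Icc 1 n,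
          ind (a < b ∧ b < x ∧ x < y) * ind (c a y = c a b ∧ ¬(c a x = c a b)) :=
    sw34 (Finset.Icc 1 n)
      (fun i j x y => ind (i < j ∧ j < y ∧ y < x) * ind (c i x = c i j ∧ ¬(c i y = c i j)))
  have main : crossings n c + (∑ k ∈ Finset.range (n / 2), k * (n - 2 - k) * Ek n c k)
      = 3 * n.choose 4 := by
    rw [hcross, lc, hA, hB]
    simp only [Finset.sum_add_distrib]
    rw [r1, r2, r3, r4, r5, r6, r8]
    simp only [← Finset.sum_add_distrib]
    rw [Finset.sum_congr rfl (fun a _ => Finset.sum_congr rfl (fun b _ =>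
      Finset.sum_congr rfl (fun x _ => Finset.sum_congr rfl (fun y _ => point_id c a b x y))))]
    simp only [← Finset.mul_sum]
    rw [count_sorted n]
  have hcast : (∑ k ∈ Finset.range (n / 2), (k : ℤ) * ((n : ℤ) - 2 - (k : ℤ)) * (Ek n c k : ℤ))
      = ((∑ k ∈ Finset.range (n / 2), k * (n - 2 - k) * Ek n c k : ℕ) : ℤ) := by
    rw [Nat.cast_sum]
    apply Finset.sum_congr rfl
    intro k hk
    rw [Finset.mem_range] at hk
    have hsub : ((n - 2 - k : ℕ) : ℤ) = (n : ℤ) - 2 - (k : ℤ) := by omega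
    rw [Nat.cast_mul, Nat.cast_mul, hsub]
  rw [hcast]
  omega
end

section
/- Let n and k be integers with 0 ≤ k < n/2 − 1, and let c be any 2-coloring of the pairs (i,j) with 1 ≤ i < j ≤ n. Then for each j with 1 ≤ j ≤ k+1 there are at least 2(k+2−j) indices l with j < l ≤ n such that the edge (j,l) is a (≤k)-edge of c; and for each j with n−k ≤ j ≤ n there are at least 2(k+1−n+j) indices i with 1 ≤ i < j such that the edge (i,j) is a (≤k)-edge of c. -/
lemma rank_above_count (S : Finset ℕ) (P : ℕ → Prop) [DecidablePred P] :
    (S.filter (fun l => P ((S.filter (fun x => l < x)).card))).card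
      = ((Finset.range S.card).filter P).card := by
  set f : ℕ → ℕ := fun l => (S.filter (fun x => l < x)).card with hf
  have hanti : ∀ a ∈ S, ∀ b ∈ S, a < b → f b < f a := by
    intro a ha b hb hab
    have hsub : S.filter (fun x => b < x) ⊆ S.filter (fun x => a < x) := by
      intro x hx; simp only [Finset.mem_filter] at hx ⊢; exact ⟨hx.1, by omega⟩
    exact Finset.card_lt_card ((Finset.ssubset_iff_of_subset hsub).mpr
      ⟨b, Finset.mem_filter.mpr ⟨hb, hab⟩, by simp⟩)
  have hinj : Set.InjOn f S := by
    intro a ha b hb hfab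
    by_contra hne
    rcases Nat.lt_or_ge a b with h | h
    · have := hanti a ha b hb h; omega
    · have h' : b < a := by omega
      have := hanti b hb a ha h'; omega
  have hlt : ∀ l ∈ S, f l < S.card := by
    intro l hl
    exact Finset.card_lt_card ((Finset.ssubset_iff_of_subset (Finset.filter_subset _ _)).mpr
      ⟨l, hl, by simp⟩)
  have himg : S.image f = Finset.range S.card := by
    apply Finset.eq_of_subset_of_card_le
    · intro v hv
      simp only [Finset.mem_image] at hv
      obtain ⟨l, hl, rfl⟩ := hv
      exact Finset.mem_range.mpr (hlt l hl)
    · rw [Finset.card_range, Finset.card_image_of_injOn hinj]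
  calc (S.filter (fun l => P (f l))).card
      = ((S.filter (fun l => P (f l))).image f).card :=
        (Finset.card_image_of_injOn (hinj.mono (Finset.coe_subset.mpr (Finset.filter_subset _ _)))).symm
    _ = ((S.image f).filter P).card := by rw [← Finset.filter_image]
    _ = ((Finset.range S.card).filter P).card := by rw [himg]

lemma rank_below_count (S : Finset ℕ) (P : ℕ → Prop) [DecidablePred P] :
    (S.filter (fun l => P ((S.filter (fun x => x < l)).card))).card
      = ((Finset.range S.card).filter P).card := by
  set f : ℕ → ℕ := fun l => (S.filter (fun x => x < l)).card with hf
  have hmono : ∀ a ∈ S, ∀ b ∈ S, a < b → f a < f b := by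
    intro a ha b hb hab
    have hsub : S.filter (fun x => x < a) ⊆ S.filter (fun x => x < b) := by
      intro x hx; simp only [Finset.mem_filter] at hx ⊢; exact ⟨hx.1, by omega⟩
    exact Finset.card_lt_card ((Finset.ssubset_iff_of_subset hsub).mpr
      ⟨a, Finset.mem_filter.mpr ⟨ha, hab⟩, by simp⟩)
  have hinj : Set.InjOn f S := by
    intro a ha b hb hfab
    by_contra hne
    rcases Nat.lt_or_ge a b with h | h
    · have := hmono a ha b hb h; omega
    · have h' : b < a := by omega
      have := hmono b hb a ha h'; omega
  have hlt : ∀ l ∈ S, f l < S.card := by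
    intro l hl
    exact Finset.card_lt_card ((Finset.ssubset_iff_of_subset (Finset.filter_subset _ _)).mpr
      ⟨l, hl, by simp⟩)
  have himg : S.image f = Finset.range S.card := by
    apply Finset.eq_of_subset_of_card_le
    · intro v hv
      simp only [Finset.mem_image] at hv
      obtain ⟨l, hl, rfl⟩ := hv
      exact Finset.mem_range.mpr (hlt l hl)
    · rw [Finset.card_range, Finset.card_image_of_injOn hinj]
  calc (S.filter (fun l => P (f l))).card
      = ((S.filter (fun l => P (f l))).image f).card :=
        (Finset.card_image_of_injOn (hinj.mono (Finset.coe_subset.mpr (Finset.filter_subset _ _)))).symm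
    _ = ((S.image f).filter P).card := by rw [← Finset.filter_image]
    _ = ((Finset.range S.card).filter P).card := by rw [himg]

lemma phi_card (m T N : ℕ) (hTN : T < N) :
    ((Finset.range m).filter (fun v => v ≤ T ∨ N ≤ v)).card = min m (T + 1) + (m - N) := by
  rw [Finset.filter_or, Finset.card_union_of_disjoint]
  · congr 1
    · have h1 : (Finset.range m).filter (fun v => v ≤ T) = Finset.range (min m (T + 1)) := by
        ext v; simp only [Finset.mem_filter, Finset.mem_range]; omega
      rw [h1, Finset.card_range]
    · have h2 : (Finset.range m).filter (fun v => N ≤ v) = Finset.Ico N m := by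
        ext v; simp only [Finset.mem_filter, Finset.mem_range, Finset.mem_Ico]; omega
      rw [h2, Nat.card_Ico]
  · rw [Finset.disjoint_left]
    intro a ha hb
    simp only [Finset.mem_filter] at ha hb
    omega

/-- For `0 ≤ k < n/2 − 1`: each row `j` with `1 ≤ j ≤ k+1` contains at
least `2(k+2−j)` entries representing `(≤k)`-edges, and each column `j` with
`n−k ≤ j ≤ n` contains at least `2(k+1−n+j)` entries representing `(≤k)`-edges. -/
theorem many_leq_k_edges_in_rows_and_columns (n k : ℕ) (hk : 2 * k + 2 < n)
    (c : ℕ → ℕ → Bool) :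
    (∀ j, 1 ≤ j → j ≤ k + 1 →
      2 * (k + 2 - j) ≤ ((Finset.Ioc j n).filter (fun l => kVal n c j l ≤ k)).card) ∧
    (∀ j, n - k ≤ j → j ≤ n →
      2 * (k + 1 + j - n) ≤ ((Finset.Ico 1 j).filter (fun i => kVal n c i j ≤ k)).card) := by
  constructor
  · -- rows
    intro j hj1 hj2
    set T := k + 1 - j with hT
    set N := n - 2 - k with hN
    have hTN : T < N := by omega
    set Sb : Bool → Finset ℕ := fun b => (Finset.Ioc j n).filter (fun x => c j x = b) with hSb
    set Gb : Bool → Finset ℕ := fun b =>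
      (Sb b).filter (fun l => ((Sb b).filter (fun x => l < x)).card ≤ T ∨
        N ≤ ((Sb b).filter (fun x => l < x)).card) with hGb
    have hsub : ∀ b, Gb b ⊆ (Finset.Ioc j n).filter (fun l => kVal n c j l ≤ k) := by
      intro b l hl
      simp only [hGb, Finset.mem_filter] at hl
      obtain ⟨hmem, hPt⟩ := hl
      rw [hSb] at hmem
      simp only [Finset.mem_filter, Finset.mem_Ioc] at hmem
      obtain ⟨⟨hjl, hln⟩, hb⟩ := hmem
      refine Finset.mem_filter.mpr ⟨Finset.mem_Ioc.mpr ⟨hjl, hln⟩, ?_⟩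
      have hsec : ((Finset.Ioc l n).filter (fun x => c j x = c j l)).card
          = ((Sb b).filter (fun x => l < x)).card := by
        congr 1
        ext x
        simp only [hSb, Finset.mem_filter, Finset.mem_Ioc, hb]
        constructor
        · rintro ⟨⟨h1, h2⟩, h3⟩; exact ⟨⟨⟨by omega, h2⟩, h3⟩, h1⟩
        · rintro ⟨⟨⟨h1, h2⟩, h3⟩, h4⟩; exact ⟨⟨h4, h2⟩, h3⟩
      have ha : ((Finset.Ico 1 j).filter (fun x => c x l = c j l)).card ≤ j - 1 := by
        calc ((Finset.Ico 1 j).filter (fun x => c x l = c j l)).card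
            ≤ (Finset.Ico 1 j).card := Finset.card_filter_le _ _
          _ = j - 1 := Nat.card_Ico 1 j
      have hs : sDeg n c j l = ((Finset.Ico 1 j).filter (fun x => c x l = c j l)).card
          + ((Sb b).filter (fun x => l < x)).card := by
        rw [sDeg, hsec]
      rw [kVal, hs]
      omega
    have hdisj : Disjoint (Gb true) (Gb false) := by
      rw [Finset.disjoint_left]
      intro a ha hb
      have h1 : c j a = true := (Finset.mem_filter.mp ((Finset.filter_subset _ _) ha)).2
      have h2 : c j a = false := (Finset.mem_filter.mp ((Finset.filter_subset _ _) hb)).2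
      simp [h1] at h2
    have hcardG : ∀ b, (Gb b).card = min (Sb b).card (T + 1) + ((Sb b).card - N) := by
      intro b
      rw [hGb]
      rw [rank_above_count (Sb b) (fun v => v ≤ T ∨ N ≤ v), phi_card _ _ _ hTN]
    have hcardS : (Sb true).card + (Sb false).card = n - j := by
      have := Finset.card_filter_add_card_filter_not
        (s := Finset.Ioc j n) (p := fun x => c j x = true)
      have hneg : (Finset.Ioc j n).filter (fun x => ¬ c j x = true)
          = (Finset.Ioc j n).filter (fun x => c j x = false) := by
        apply Finset.filter_congr; intro x _; simp
      rw [hneg] at this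
      simpa [hSb, Nat.card_Ioc] using this
    have hle : (Gb true).card + (Gb false).card
        ≤ ((Finset.Ioc j n).filter (fun l => kVal n c j l ≤ k)).card := by
      rw [← Finset.card_union_of_disjoint hdisj]
      exact Finset.card_le_card (Finset.union_subset (hsub true) (hsub false))
    have h1 := hcardG true
    have h2 := hcardG false
    omega
  · -- columns
    intro j hj1 hj2
    set T := k + j - n with hT
    set N := n - 2 - k with hN
    have hTN : T < N := by omega
    set Sb : Bool → Finset ℕ := fun b => (Finset.Ico 1 j).filter (fun x => c x j = b) with hSb
    set Gb : Bool → Finset ℕ := fun b =>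
      (Sb b).filter (fun l => ((Sb b).filter (fun x => x < l)).card ≤ T ∨
        N ≤ ((Sb b).filter (fun x => x < l)).card) with hGb
    have hsub : ∀ b, Gb b ⊆ (Finset.Ico 1 j).filter (fun i => kVal n c i j ≤ k) := by
      intro b i hi
      simp only [hGb, Finset.mem_filter] at hi
      obtain ⟨hmem, hPt⟩ := hi
      rw [hSb] at hmem
      simp only [Finset.mem_filter, Finset.mem_Ico] at hmem
      obtain ⟨⟨h1i, hij⟩, hb⟩ := hmem
      refine Finset.mem_filter.mpr ⟨Finset.mem_Ico.mpr ⟨h1i, hij⟩, ?_⟩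
      have hfst : ((Finset.Ico 1 i).filter (fun x => c x j = c i j)).card
          = ((Sb b).filter (fun x => x < i)).card := by
        congr 1
        ext x
        simp only [hSb, Finset.mem_filter, Finset.mem_Ico, hb]
        constructor
        · rintro ⟨⟨h1, h2⟩, h3⟩; exact ⟨⟨⟨h1, by omega⟩, h3⟩, h2⟩
        · rintro ⟨⟨⟨h1, h2⟩, h3⟩, h4⟩; exact ⟨⟨h1, h4⟩, h3⟩
      have ha : ((Finset.Ioc j n).filter (fun x => c i x = c i j)).card ≤ n - j := by
        calc ((Finset.Ioc j n).filter (fun x => c i x = c i j)).card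
            ≤ (Finset.Ioc j n).card := Finset.card_filter_le _ _
          _ = n - j := Nat.card_Ioc j n
      have hs : sDeg n c i j = ((Sb b).filter (fun x => x < i)).card
          + ((Finset.Ioc j n).filter (fun x => c i x = c i j)).card := by
        rw [sDeg, hfst]
      rw [kVal, hs]
      omega
    have hdisj : Disjoint (Gb true) (Gb false) := by
      rw [Finset.disjoint_left]
      intro a ha hb
      have h1 : c a j = true := (Finset.mem_filter.mp ((Finset.filter_subset _ _) ha)).2
      have h2 : c a j = false := (Finset.mem_filter.mp ((Finset.filter_subset _ _) hb)).2
      simp [h1] at h2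
    have hcardG : ∀ b, (Gb b).card = min (Sb b).card (T + 1) + ((Sb b).card - N) := by
      intro b
      rw [hGb]
      rw [rank_below_count (Sb b) (fun v => v ≤ T ∨ N ≤ v), phi_card _ _ _ hTN]
    have hcardS : (Sb true).card + (Sb false).card = j - 1 := by
      have := Finset.card_filter_add_card_filter_not
        (s := Finset.Ico 1 j) (p := fun x => c x j = true)
      have hneg : (Finset.Ico 1 j).filter (fun x => ¬ c x j = true)
          = (Finset.Ico 1 j).filter (fun x => c x j = false) := by
        apply Finset.filter_congr; intro x _; simp
      rw [hneg] at this
      simpa [hSb, Nat.card_Ico] using this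
    have hle : (Gb true).card + (Gb false).card
        ≤ ((Finset.Ico 1 j).filter (fun i => kVal n c i j ≤ k)).card := by
      rw [← Finset.card_union_of_disjoint hdisj]
      exact Finset.card_le_card (Finset.union_subset (hsub true) (hsub false))
    have h1 := hcardG true
    have h2 := hcardG false
    omega
end

section
/- Let c be any 2-coloring of the pairs (i,j) with 1 ≤ i < j ≤ n. For every integer j with 0 ≤ j < n/2 − 1 there are at least two indices i with 1 ≤ i ≤ n−1 such that the edge (i,n) is a j-edge of c. Moreover, if n is even, there is at least one index i with 1 ≤ i ≤ n−1 such that the edge (i,n) is an (n/2 − 1)-edge of c. -/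
lemma exists_count (S : Finset ℕ) {v : ℕ} (hv : v < S.card) :
    ∃ i ∈ S, (S.filter (· < i)).card = v := by
  classical
  set f : ℕ → ℕ := fun i => (S.filter (· < i)).card with hf
  have hmaps : ∀ i ∈ S, f i ∈ Finset.range S.card := by
    intro i hi
    simp only [Finset.mem_range, hf]
    calc (S.filter (· < i)).card ≤ (S.erase i).card := by
          apply Finset.card_le_card
          intro x hx
          simp only [Finset.mem_filter] at hx
          exact Finset.mem_erase.2 ⟨Nat.ne_of_lt hx.2, hx.1⟩
      _ < S.card := Finset.card_erase_lt_of_mem hi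
  have hinj : Set.InjOn f S := by
    intro a ha b hb hab
    by_contra hne
    rcases Nat.lt_or_ge a b with h | h
    · have : f a < f b := by
        apply Finset.card_lt_card
        constructor
        · intro x hx
          simp only [Finset.mem_filter] at hx ⊢
          exact ⟨hx.1, lt_trans hx.2 h⟩
        · intro hsub
          have := hsub (Finset.mem_filter.2 ⟨ha, h⟩)
          simp only [Finset.mem_filter] at this
          exact lt_irrefl a this.2
      omega
    · have h' : b < a := lt_of_le_of_ne h (Ne.symm hne)
      have : f b < f a := by
          apply Finset.card_lt_card
          constructor
          · intro x hx
            simp only [Finset.mem_filter] at hx ⊢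
            exact ⟨hx.1, lt_trans hx.2 h'⟩
          · intro hsub
            have := hsub (Finset.mem_filter.2 ⟨hb, h'⟩)
            simp only [Finset.mem_filter] at this
            exact lt_irrefl b this.2
      omega
  have himg : S.image f = Finset.range S.card := by
    apply Finset.eq_of_subset_of_card_le
    · intro x hx
      obtain ⟨i, hi, rfl⟩ := Finset.mem_image.1 hx
      exact hmaps i hi
    · rw [Finset.card_range, Finset.card_image_of_injOn hinj]
  have : v ∈ S.image f := by rw [himg]; exact Finset.mem_range.2 hv
  obtain ⟨i, hi, hfi⟩ := Finset.mem_image.1 this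
  exact ⟨i, hi, hfi⟩

lemma sDeg_last (n : ℕ) (c : ℕ → ℕ → Bool) (i : ℕ) (hi : i ∈ Finset.Ico 1 n) :
    sDeg n c i n =
      (((Finset.Ico 1 n).filter (fun l => c l n = c i n)).filter (· < i)).card := by
  simp only [Finset.mem_Ico] at hi
  unfold sDeg
  rw [Finset.Ioc_self, Finset.filter_empty, Finset.card_empty, Nat.add_zero]
  congr 1
  ext l
  simp only [Finset.mem_filter, Finset.mem_Ico]
  constructor
  · rintro ⟨⟨h1, h2⟩, h3⟩
    exact ⟨⟨⟨h1, lt_trans h2 hi.2⟩, h3⟩, h2⟩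
  · rintro ⟨⟨⟨h1, _⟩, h3⟩, h4⟩
    exact ⟨⟨h1, h4⟩, h3⟩

lemma exists_sDeg (n : ℕ) (c : ℕ → ℕ → Bool) (b : Bool) {v : ℕ}
    (hv : v < ((Finset.Ico 1 n).filter (fun l => c l n = b)).card) :
    ∃ i ∈ Finset.Ico 1 n, c i n = b ∧ sDeg n c i n = v := by
  obtain ⟨i, hi, hcount⟩ := exists_count _ hv
  rw [Finset.mem_filter] at hi
  refine ⟨i, hi.1, hi.2, ?_⟩
  rw [sDeg_last n c i hi.1, hi.2]
  exact hcount

/-- For every `0 ≤ j < n/2 − 1` there are at least two indices `i < n`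
such that `(i,n)` is a `j`-edge; and for `n` even there is at least one `i < n` such
that `(i,n)` is an `(n/2 − 1)`-edge. -/
theorem two_j_edges_in_last_column (n : ℕ) (hn : 0 < n) (c : ℕ → ℕ → Bool) :
    (∀ j, 2 * j + 2 < n →
      2 ≤ ((Finset.Ico 1 n).filter (fun i => kVal n c i n = j)).card) ∧
    (Even n →
      1 ≤ ((Finset.Ico 1 n).filter (fun i => kVal n c i n = n / 2 - 1)).card) := by
  have htf : ((Finset.Ico 1 n).filter (fun l => c l n = true)).card +
      ((Finset.Ico 1 n).filter (fun l => c l n = false)).card = n - 1 := by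
    have := Finset.card_filter_add_card_filter_not
      (s := Finset.Ico 1 n) (p := fun l => c l n = true)
    simp only [Bool.not_eq_true] at this
    rw [this, Nat.card_Ico]
  set t := ((Finset.Ico 1 n).filter (fun l => c l n = true)).card with ht
  set f := ((Finset.Ico 1 n).filter (fun l => c l n = false)).card with hf
  constructor
  · intro j hj
    have key : ∀ (b : Bool) (v : ℕ), (v = j ∨ v = n - 2 - j) →
        v < ((Finset.Ico 1 n).filter (fun l => c l n = b)).card →
        ∃ i ∈ Finset.Ico 1 n, c i n = b ∧ sDeg n c i n = v ∧ kVal n c i n = j := by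
      intro b v hv hlt
      obtain ⟨i, hi, hb, hs⟩ := exists_sDeg n c b hlt
      refine ⟨i, hi, hb, hs, ?_⟩
      unfold kVal
      rw [hs]
      omega
    rw [show (2 : ℕ) = 1 + 1 by rfl, Nat.add_one_le_iff, Finset.one_lt_card]
    by_cases h1 : j < t
    · by_cases h2 : j < f
      · obtain ⟨i₁, hi₁, hb₁, _, hk₁⟩ := key true j (Or.inl rfl) h1
        obtain ⟨i₂, hi₂, hb₂, _, hk₂⟩ := key false j (Or.inl rfl) h2
        refine ⟨i₁, Finset.mem_filter.2 ⟨hi₁, hk₁⟩, i₂, Finset.mem_filter.2 ⟨hi₂, hk₂⟩, ?_⟩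
        intro h
        rw [h, hb₂] at hb₁
        exact Bool.false_ne_true hb₁
      · obtain ⟨i₁, hi₁, _, hs₁, hk₁⟩ := key true j (Or.inl rfl) h1
        obtain ⟨i₂, hi₂, _, hs₂, hk₂⟩ := key true (n - 2 - j) (Or.inr rfl) (by omega)
        refine ⟨i₁, Finset.mem_filter.2 ⟨hi₁, hk₁⟩, i₂, Finset.mem_filter.2 ⟨hi₂, hk₂⟩, ?_⟩
        intro h
        rw [h, hs₂] at hs₁
        omega
    · by_cases h2 : j < f
      · obtain ⟨i₁, hi₁, _, hs₁, hk₁⟩ := key false j (Or.inl rfl) h2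
        obtain ⟨i₂, hi₂, _, hs₂, hk₂⟩ := key false (n - 2 - j) (Or.inr rfl) (by omega)
        refine ⟨i₁, Finset.mem_filter.2 ⟨hi₁, hk₁⟩, i₂, Finset.mem_filter.2 ⟨hi₂, hk₂⟩, ?_⟩
        intro h
        rw [h, hs₂] at hs₁
        omega
      · omega
  · intro he
    obtain ⟨m, hm⟩ := he
    have key : ∀ (b : Bool), n / 2 - 1 < ((Finset.Ico 1 n).filter (fun l => c l n = b)).card →
        ∃ i ∈ Finset.Ico 1 n, kVal n c i n = n / 2 - 1 := by
      intro b hlt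
      obtain ⟨i, hi, _, hs⟩ := exists_sDeg n c b hlt
      refine ⟨i, hi, ?_⟩
      unfold kVal
      rw [hs]
      omega
    have : n / 2 - 1 < t ∨ n / 2 - 1 < f := by omega
    rcases this with h | h
    · obtain ⟨i, hi, hk⟩ := key true h
      exact Finset.card_pos.2 ⟨i, Finset.mem_filter.2 ⟨hi, hk⟩⟩
    · obtain ⟨i, hi, hk⟩ := key false h
      exact Finset.card_pos.2 ⟨i, Finset.mem_filter.2 ⟨hi, hk⟩⟩
end

section
/- For every integer n ≥ 3, every 2-coloring c of the pairs (i,j) with 1 ≤ i < j ≤ n, and every integer k with 0 ≤ k < n/2 − 1, the inequality E_{≤≤k}(c) ≥ 3·binom(k+3,3) holds. -/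
/-! Write `E_{≤≤k}(c) = ∑ (k + 1 - kVal)` over the edges and induct on `k`, deleting the last
vertex `n = m + 1`.

For `i ≤ m`, `s(i, n)` is the rank of `i` in its colour class `{l ≤ m | c l n = c i n}`; as
`t ↦ min t (m - 1 - t)` is symmetric, the two classes together contribute
`∑_{t < m} (k + 1 - min t (m - 1 - t)) = 2·C(k+2, 2)` through the edges at `n`, whatever their sizes.

Adding `n` raises the value of an edge of `K_m` by at most one, so these edges contribute at least
`E_{≤≤(k-1)}` of the restriction of `c`, plus one per invariant `(≤ k)`-edge. In row `i ≤ k + 1`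
the entries `(i, q)` coloured unlike `(i, n)` keep `s(i, q)`, the others gain one. An entry of the
first kind with at most `k + 1 - i` later entries of its colour, or of the second kind with at
least `m - 1 - k`, is an invariant `(≤ k)`-edge; there are at least `k + 2 - i` of them, hence
`C(k+2, 2)` in all, and `3·C(k+3, 3) = 3·C(k+2, 3) + 3·C(k+2, 2)` closes the induction. -/

open Finset

section Rank

variable {α M : Type*} [LinearOrder α] [AddCommMonoid M]

theorem strictMonoOn_card_filter_lt (S : Finset α) :
    StrictMonoOn (fun x => #{y ∈ S | y < x}) S := by
  intro x hx y _ hxy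
  refine card_lt_card ((ssubset_iff_of_subset ?_).2 ⟨x, ?_, ?_⟩)
  · intro z hz
    simp only [mem_filter] at hz ⊢
    exact ⟨hz.1, hz.2.trans hxy⟩
  · exact mem_filter.2 ⟨hx, hxy⟩
  · simp

theorem sum_card_filter_lt (S : Finset α) (g : ℕ → M) :
    ∑ x ∈ S, g #{y ∈ S | y < x} = ∑ t ∈ range #S, g t := by
  have hinj := (strictMonoOn_card_filter_lt S).injOn
  have himage : S.image (fun x => #{y ∈ S | y < x}) = range #S := by
    refine eq_of_subset_of_card_le (fun t ht => ?_) (by rw [card_image_of_injOn hinj, card_range])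
    obtain ⟨x, hx, rfl⟩ := mem_image.1 ht
    exact mem_range.2 (card_lt_card (filter_ssubset.2 ⟨x, hx, lt_irrefl x⟩))
  rw [← himage, sum_image hinj]

theorem sum_card_filter_gt (S : Finset α) (g : ℕ → M) :
    ∑ x ∈ S, g #{y ∈ S | x < y} = ∑ t ∈ range #S, g t :=
  sum_card_filter_lt (α := αᵒᵈ) S g

theorem card_filter_card_filter_gt (S : Finset α) (P : ℕ → Prop) [DecidablePred P] :
    #{x ∈ S | P #{y ∈ S | x < y}} = #{t ∈ range #S | P t} := by
  simpa only [card_filter] using sum_card_filter_gt S fun t => if P t then 1 else 0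

end Rank

section Arithmetic

variable {M : Type*} [AddCommMonoid M]

theorem sum_range_sub_eq_choose_two {k m : ℕ} (h : k ≤ m) :
    ∑ t ∈ range m, (k - t) = (k + 1).choose 2 := by
  induction k generalizing m with
  | zero => simp
  | succ k ih =>
    obtain ⟨m, rfl⟩ : ∃ m', m = m' + 1 := ⟨m - 1, by omega⟩
    rw [sum_range_succ', Nat.choose_succ_succ' (k + 1) 1, ← ih (m := m) (by omega)]
    simp [add_comm]

theorem sum_range_add_sum_range_sub {g : ℕ → M} {m s : ℕ}
    (hg : ∀ t < m, g (m - 1 - t) = g t) (hs : s ≤ m) :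
    ∑ t ∈ range s, g t + ∑ t ∈ range (m - s), g t = ∑ t ∈ range m, g t := by
  obtain ⟨r, rfl⟩ := Nat.exists_eq_add_of_le hs
  rw [sum_range_add, Nat.add_sub_cancel_left, ← sum_range_reflect (fun u => g (s + u)) r]
  refine congrArg _ (sum_congr rfl fun t ht => ?_)
  rw [mem_range] at ht
  rw [← hg t (by omega)]
  congr 1
  omega

theorem sum_range_sub_min_eq {k m : ℕ} (hk : 2 * k + 2 ≤ m) :
    ∑ t ∈ range m, (k + 1 - min t (m - 1 - t)) = 2 * (k + 2).choose 2 := by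
  have hsplit : ∀ t ∈ range m,
      k + 1 - min t (m - 1 - t) = (k + 1 - t) + (k + 1 - (m - 1 - t)) := by
    intro t ht
    rw [mem_range] at ht
    omega
  rw [sum_congr rfl hsplit, sum_add_distrib, sum_range_reflect (k + 1 - ·) m,
    sum_range_sub_eq_choose_two (by omega)]
  ring

theorem card_range_filter_le (s a : ℕ) : #{t ∈ range s | t ≤ a} = min s (a + 1) := by
  rw [← card_range (min s (a + 1))]
  congr 1
  ext t
  simp only [mem_filter, mem_range]
  omega

theorem card_range_filter_ge (s r : ℕ) : #{t ∈ range s | r ≤ t} = s - r := by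
  rw [← Nat.card_Ico r s]
  congr 1
  ext t
  simp only [mem_filter, mem_range, mem_Ico]
  omega

end Arithmetic

section Coloring

variable (c : ℕ → ℕ → Bool)

def edges (n : ℕ) : Finset (ℕ × ℕ) := {p ∈ Icc 1 n ×ˢ Icc 1 n | p.1 < p.2}

theorem mem_edges {n : ℕ} {p : ℕ × ℕ} : p ∈ edges n ↔ 1 ≤ p.1 ∧ p.1 < p.2 ∧ p.2 ≤ n := by
  simp only [edges, mem_filter, mem_product, mem_Icc]
  omega

theorem sum_edges_succ {M : Type*} [AddCommMonoid M] (f : ℕ × ℕ → M) (m : ℕ) :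
    ∑ p ∈ edges (m + 1), f p = ∑ p ∈ edges m, f p + ∑ i ∈ Icc 1 m, f (i, m + 1) := by
  have hsplit : edges (m + 1) = edges m ∪ (Icc 1 m).image (·, m + 1) := by
    ext ⟨i, j⟩
    simp only [mem_union, mem_image, mem_edges, mem_Icc, Prod.mk.injEq]
    constructor
    · intro h
      by_cases hj : j = m + 1
      · exact Or.inr ⟨i, by omega, rfl, hj.symm⟩
      · exact Or.inl (by omega)
    · rintro (h | ⟨i, hi, rfl, rfl⟩) <;> omega
  rw [hsplit, sum_union, sum_image fun _ _ _ _ h => (Prod.mk.inj h).1]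
  rw [disjoint_left]
  intro p hp hp'
  obtain ⟨i, -, rfl⟩ := mem_image.1 hp'
  have := mem_edges.1 hp
  omega

theorem card_filter_edges (n : ℕ) (P : ℕ × ℕ → Prop) [DecidablePred P] :
    #{p ∈ edges n | P p} = ∑ i ∈ Icc 1 n, #{j ∈ Ioc i n | P (i, j)} := by
  rw [card_eq_sum_ones, sum_finset_product _ (Icc 1 n) (fun i => {j ∈ Ioc i n | P (i, j)})]
  · simp only [← card_eq_sum_ones]
  · rintro ⟨i, j⟩
    simp only [mem_filter, mem_edges, mem_Icc, mem_Ioc]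
    grind

theorem Eleq_eq_card (n a : ℕ) : Eleq n c a = #{p ∈ edges n | kVal n c p.1 p.2 ≤ a} := by
  have hmaps : Set.MapsTo (fun p : ℕ × ℕ => kVal n c p.1 p.2)
      ({p ∈ edges n | kVal n c p.1 p.2 ≤ a} : Finset (ℕ × ℕ)) (range (a + 1)) := by
    intro p hp
    rw [mem_coe, mem_filter] at hp
    exact mem_range.2 (Nat.lt_succ_of_le hp.2)
  rw [Eleq, card_eq_sum_card_fiberwise hmaps]
  refine sum_congr rfl fun b hb => ?_
  rw [Ek, edges, filter_filter, filter_filter]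
  congr 1
  ext p
  simp only [mem_filter, mem_range] at hb ⊢
  exact and_congr_right fun _ => and_congr_right fun _ => ⟨fun h => ⟨by omega, h⟩, And.right⟩

theorem Eleqleq_eq_sum (n k : ℕ) :
    Eleqleq n c k = ∑ p ∈ edges n, (k + 1 - kVal n c p.1 p.2) := by
  simp only [Eleqleq, Eleq_eq_card, card_filter]
  rw [sum_comm]
  refine sum_congr rfl fun p _ => ?_
  rw [sum_boole, Nat.cast_id, card_range_filter_ge]

theorem EleqInv_succ_eq (m k : ℕ) : EleqInv (m + 1) c k =
    #{p ∈ edges m | kVal (m + 1) c p.1 p.2 = kVal m c p.1 p.2 ∧ kVal (m + 1) c p.1 p.2 ≤ k} := by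
  rw [EleqInv, edges, filter_filter, Nat.add_sub_cancel]

end Coloring

section Invariance

variable (c : ℕ → ℕ → Bool) {m i j k : ℕ}

theorem sDeg_succ (hj : j ≤ m) :
    sDeg (m + 1) c i j = sDeg m c i j + if c i (m + 1) = c i j then 1 else 0 := by
  have hIoc : Ioc j (m + 1) = insert (m + 1) (Ioc j m) := by
    ext l
    simp only [mem_Ioc, mem_insert]
    omega
  rw [sDeg, sDeg, hIoc, filter_insert]
  split_ifs with h
  · rw [card_insert_of_notMem (by simp), add_assoc]
  · rfl

theorem kVal_succ_le (hj : j ≤ m) : kVal (m + 1) c i j ≤ kVal m c i j + 1 := by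
  rw [kVal, kVal, sDeg_succ c hj]
  split_ifs <;> omega

theorem kVal_succ_eq_of_sDeg_le (hk : 2 * k + 2 ≤ m) (hj : j ≤ m) (hc : c i (m + 1) ≠ c i j)
    (hs : sDeg (m + 1) c i j ≤ k) :
    kVal (m + 1) c i j = kVal m c i j ∧ kVal (m + 1) c i j ≤ k := by
  have h := sDeg_succ c (i := i) hj
  rw [if_neg hc] at h
  rw [kVal, kVal]
  omega

theorem kVal_succ_eq_of_le_sDeg (hk : 2 * k + 2 ≤ m) (hj : j ≤ m) (hc : c i (m + 1) = c i j)
    (hs : m - 1 - k ≤ sDeg (m + 1) c i j) :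
    kVal (m + 1) c i j = kVal m c i j ∧ kVal (m + 1) c i j ≤ k := by
  have h := sDeg_succ c (i := i) hj
  rw [if_pos hc] at h
  rw [kVal, kVal]
  omega

end Invariance

section Counting

variable (c : ℕ → ℕ → Bool) {m k : ℕ}

theorem sDeg_last_s6 {i : ℕ} (hi : i ∈ Icc 1 m) :
    sDeg (m + 1) c i (m + 1) = #{l ∈ {l ∈ Icc 1 m | c l (m + 1) = c i (m + 1)} | l < i} := by
  rw [sDeg, Ioc_self, filter_empty, card_empty, add_zero, filter_filter]
  rw [mem_Icc] at hi
  congr 1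
  ext l
  simp only [mem_filter, mem_Ico, mem_Icc]
  constructor
  · rintro ⟨⟨h1, h2⟩, h3⟩
    exact ⟨⟨h1, by omega⟩, h3, h2⟩
  · rintro ⟨⟨h1, -⟩, h3, h2⟩
    exact ⟨⟨h1, h2⟩, h3⟩

theorem sum_sub_kVal_last (hk : 2 * k + 2 ≤ m) :
    ∑ i ∈ Icc 1 m, (k + 1 - kVal (m + 1) c i (m + 1)) = 2 * (k + 2).choose 2 := by
  set S : Bool → Finset ℕ := fun b => {l ∈ Icc 1 m | c l (m + 1) = b}
  set g : ℕ → ℕ := fun t => k + 1 - min t (m - 1 - t)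
  have hclass : ∀ b, ∑ i ∈ S b, (k + 1 - kVal (m + 1) c i (m + 1)) = ∑ t ∈ range #(S b), g t := by
    intro b
    rw [← sum_card_filter_lt (S b) g]
    refine sum_congr rfl fun i hi => ?_
    obtain ⟨hiI, rfl⟩ := mem_filter.1 hi
    rw [kVal, sDeg_last_s6 c hiI, Nat.add_sub_add_right m 1 1]
  have hcard : #(S true) + #(S false) = m := by
    rw [← Fintype.sum_bool fun b => #(S b), ← card_eq_sum_card_fiberwise (fun _ _ => mem_univ _),
      Nat.card_Icc, Nat.add_sub_cancel]
  have hg : ∀ t < m, g (m - 1 - t) = g t := fun t ht => by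
    simp only [g]
    omega
  rw [← sum_fiberwise (Icc 1 m) (c · (m + 1)), Fintype.sum_bool, hclass, hclass,
    show #(S false) = m - #(S true) by omega, sum_range_add_sum_range_sub hg (by omega),
    sum_range_sub_min_eq hk]

end Counting

section Row

variable (c : ℕ → ℕ → Bool) {m k i q : ℕ} {b : Bool}

def rowClass (i n : ℕ) (b : Bool) : Finset ℕ := {l ∈ Ioc i n | c i l = b}

def invariantRow (m k i : ℕ) : Finset ℕ :=
  {j ∈ Ioc i m | kVal (m + 1) c i j = kVal m c i j ∧ kVal (m + 1) c i j ≤ k}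

theorem card_rowClass_add_card_rowClass_not (i n : ℕ) (b : Bool) :
    #(rowClass c i n b) + #(rowClass c i n (!b)) = n - i := by
  rw [← Nat.card_Ioc i n, ← card_filter_add_card_filter_not (s := Ioc i n) (fun l => c i l = b)]
  simp only [rowClass, Bool.eq_not]

theorem sDeg_eq_add_card_gt {n : ℕ} (hq : q ∈ Ioc i n) :
    sDeg n c i q = #{l ∈ Ico 1 i | c l q = c i q} + #{l ∈ rowClass c i n (c i q) | q < l} := by
  rw [sDeg, rowClass, filter_filter]
  rw [mem_Ioc] at hq
  congr 2
  ext l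
  simp only [mem_filter, mem_Ioc]
  constructor
  · rintro ⟨⟨h1, h2⟩, h3⟩
    exact ⟨⟨by omega, h2⟩, h3, h1⟩
  · rintro ⟨⟨-, h2⟩, h3, h1⟩
    exact ⟨⟨h1, h2⟩, h3⟩

theorem mem_invariantRow_of_ne (hk : 2 * k + 2 ≤ m) (hi : 1 ≤ i) (hik : i ≤ k + 1)
    (hq : q ∈ rowClass c i (m + 1) b) (hb : b ≠ c i (m + 1))
    (hrank : #{l ∈ rowClass c i (m + 1) b | q < l} ≤ k + 1 - i) : q ∈ invariantRow c m k i := by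
  obtain ⟨hqI, rfl⟩ := mem_filter.1 hq
  have hs := sDeg_eq_add_card_gt c hqI
  have hleft : #{l ∈ Ico 1 i | c l q = c i q} ≤ i - 1 :=
    (card_filter_le _ _).trans (Nat.card_Ico 1 i).le
  rw [mem_Ioc] at hqI
  have hqm : q ≤ m := by
    rcases Nat.lt_or_eq_of_le hqI.2 with h | rfl
    · omega
    · exact absurd rfl hb
  exact mem_filter.2 ⟨mem_Ioc.2 ⟨hqI.1, hqm⟩,
    kVal_succ_eq_of_sDeg_le c hk hqm hb.symm (by omega)⟩

theorem mem_invariantRow_of_eq (hk : 2 * k + 2 ≤ m) (hq : q ∈ rowClass c i (m + 1) (c i (m + 1)))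
    (hrank : m - 1 - k ≤ #{l ∈ rowClass c i (m + 1) (c i (m + 1)) | q < l}) :
    q ∈ invariantRow c m k i := by
  obtain ⟨hqI, hcq⟩ := mem_filter.1 hq
  have hqm : q ≤ m := by
    by_contra! hqm
    have hlast : #{l ∈ rowClass c i (m + 1) (c i (m + 1)) | q < l} = 0 := by
      rw [card_eq_zero, filter_eq_empty_iff]
      intro l hl
      have := (mem_Ioc.1 (mem_filter.1 hl).1).2
      omega
    omega
  rw [← hcq] at hrank
  have hs := sDeg_eq_add_card_gt c hqI
  exact mem_filter.2 ⟨mem_Ioc.2 ⟨(mem_Ioc.1 hqI).1, hqm⟩,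
    kVal_succ_eq_of_le_sDeg c hk hqm hcq.symm (by omega)⟩

theorem card_invariantRow_ge (hk : 2 * k + 2 ≤ m) (hi : 1 ≤ i) :
    k + 2 - i ≤ #(invariantRow c m k i) := by
  by_cases hik : k + 1 < i
  · omega
  set b := c i (m + 1)
  have hcard := card_rowClass_add_card_rowClass_not c i (m + 1) b
  set X := rowClass c i (m + 1)
  have hother : {q ∈ X (!b) | #{l ∈ X (!b) | q < l} ≤ k + 1 - i} ⊆ invariantRow c m k i :=
    fun q hq => mem_invariantRow_of_ne c hk hi (by omega) (mem_filter.1 hq).1 (by simp [b])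
      (mem_filter.1 hq).2
  have hsame : {q ∈ X b | m - 1 - k ≤ #{l ∈ X b | q < l}} ⊆ invariantRow c m k i :=
    fun q hq => mem_invariantRow_of_eq c hk (mem_filter.1 hq).1 (mem_filter.1 hq).2
  have hdisj : Disjoint {q ∈ X (!b) | #{l ∈ X (!b) | q < l} ≤ k + 1 - i}
      {q ∈ X b | m - 1 - k ≤ #{l ∈ X b | q < l}} := by
    refine disjoint_filter_filter (disjoint_filter.2 fun l _ h h' => ?_)
    simp [h] at h'
  have := card_le_card (union_subset hother hsame)
  rw [card_union_of_disjoint hdisj, card_filter_card_filter_gt (X (!b)) (· ≤ k + 1 - i),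
    card_filter_card_filter_gt (X b) (m - 1 - k ≤ ·),
    card_range_filter_le, card_range_filter_ge] at this
  omega

end Row

section Induction

variable (c : ℕ → ℕ → Bool) {m k : ℕ}

theorem choose_two_le_EleqInv (hk : 2 * k + 2 ≤ m) : (k + 2).choose 2 ≤ EleqInv (m + 1) c k := by
  rw [EleqInv_succ_eq, card_filter_edges, ← sum_range_sub_eq_choose_two (m := m) (by omega),
    ← Ico_add_one_right_eq_Icc, sum_Ico_eq_sum_range, Nat.add_sub_cancel]
  exact sum_le_sum fun t _ =>
    (show k + 1 - t ≤ k + 2 - (1 + t) by omega).trans (card_invariantRow_ge c hk (by omega))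

theorem sum_sub_kVal_add_EleqInv_le :
    ∑ p ∈ edges m, (k - kVal m c p.1 p.2) + EleqInv (m + 1) c k ≤
      ∑ p ∈ edges m, (k + 1 - kVal (m + 1) c p.1 p.2) := by
  rw [EleqInv_succ_eq, card_filter, ← sum_add_distrib]
  refine sum_le_sum fun p hp => ?_
  have := kVal_succ_le c (i := p.1) (mem_edges.1 hp).2.2
  split_ifs <;> omega

theorem Eleqleq_succ_ge (hk : 2 * k + 2 ≤ m) :
    ∑ p ∈ edges m, (k - kVal m c p.1 p.2) + 3 * (k + 2).choose 2 ≤ Eleqleq (m + 1) c k := by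
  rw [Eleqleq_eq_sum, sum_edges_succ, sum_sub_kVal_last c hk]
  have := sum_sub_kVal_add_EleqInv_le c (m := m) (k := k)
  have := choose_two_le_EleqInv c hk
  omega

end Induction

theorem Eleqleq_lower_bound_general (n k : ℕ) (hk : 2 * k + 2 < n)
    (c : ℕ → ℕ → Bool) :
    3 * (k + 3).choose 3 ≤ Eleqleq n c k := by
  induction k generalizing n with
  | zero =>
    obtain ⟨m, rfl⟩ : ∃ m, n = m + 1 := ⟨n - 1, by omega⟩
    simpa using Eleqleq_succ_ge c (k := 0) (m := m) (by omega)
  | succ k ih =>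
    obtain ⟨m, rfl⟩ : ∃ m, n = m + 1 := ⟨n - 1, by omega⟩
    have hstep : Eleqleq m c k + 3 * (k + 3).choose 2 ≤ Eleqleq (m + 1) c (k + 1) := by
      rw [Eleqleq_eq_sum c m k]
      exact Eleqleq_succ_ge c (by omega)
    have := ih m (by omega)
    rw [show (k + 1 + 3).choose 3 = (k + 3).choose 2 + (k + 3).choose 3 from
      Nat.choose_succ_succ' (k + 3) 2]
    omega

/-- For `n ≥ 3` and `0 ≤ k < n/2 − 1`, `E_{≤≤k}(c) ≥ 3·C(k+3,3)`. -/
theorem Eleqleq_lower_bound (n k : ℕ) (hn : 3 ≤ n) (hk : 2 * k + 2 < n)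
    (c : ℕ → ℕ → Bool) :
    3 * (k + 3).choose 3 ≤ Eleqleq n c k :=
  Eleqleq_lower_bound_general n k hk c
end

section
/- For every integer n ≥ 4, every 2-coloring c of the pairs (i,j) with 1 ≤ i < j ≤ n, and every integer k with 0 ≤ k < n/2 − 1, the inequality E_{≤k}(c,c₁) ≥ binom(k+2,2) holds, where c₁ is the restriction of c to the pairs (i,j) with 1 ≤ i < j ≤ n−1. -/
open Finset

/-!
For each `i ≤ k + 1` we exhibit `k + 2 - i` edges `(i, j)` that are invariant `(≤ k)`-edges;
summing over `i` gives `C(k + 2, 2)`.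

Write `s(i,j) = a + b`, where `a ≤ i - 1` counts the `l < i` and `b` the `l > j`. Deleting the
vertex `n` leaves `s(i,j)` unchanged when `c i j ≠ c i n`, so such an edge is an invariant
`(≤ k)`-edge as soon as `s(i,j) ≤ k`; it lowers `s(i,j)` by one when `c i j = c i n`, and then
the edge is an invariant `(≤ k)`-edge as soon as `n - 2 - s(i,j) ≤ k`. Order the vertices
`j ∈ (i, n]` by listing first those with `c i j ≠ c i n` by decreasing `j`, then those with
`c i j = c i n` by increasing `j`. The position of `j` in this list bounds `s(i,j) - (i - 1)`
in the first case and `n - 2 - s(i,j) - (i - 1)` in the second, so the first `k + 2 - i`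
vertices of the list give invariant `(≤ k)`-edges.
-/

namespace BookDrawing

def offColorCount (n : ℕ) (c : ℕ → ℕ → Bool) (i j : ℕ) : ℕ :=
  #{l ∈ Ioc j n | c i l ≠ c i n}

/-- The position (from `0`) of `j ∈ (i, n]` in the list of the vertices `l ∈ (i, n]` that starts
with those with `c i l ≠ c i n` by decreasing `l` and continues with the others by increasing `l`. -/
def edgeRank (n : ℕ) (c : ℕ → ℕ → Bool) (i j : ℕ) : ℕ :=
  if c i j = c i n then j - i - 1 + offColorCount n c i j else offColorCount n c i j

variable {n : ℕ} {c : ℕ → ℕ → Bool} {i j : ℕ}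

lemma offColorCount_le : offColorCount n c i j ≤ n - j :=
  (card_filter_le _ _).trans (Nat.card_Ioc j n).le

lemma offColorCount_eq_add {j' : ℕ} (hjj' : j ≤ j') (hj'n : j' ≤ n) :
    offColorCount n c i j = #{l ∈ Ioc j j' | c i l ≠ c i n} + offColorCount n c i j' := by
  rw [offColorCount, offColorCount, ← Ioc_union_Ioc_eq_Ioc hjj' hj'n, filter_union,
    card_union_of_disjoint (disjoint_filter_filter (Ioc_disjoint_Ioc_of_le le_rfl))]

lemma edgeRank_ne {j' : ℕ} (hij : i < j) (hjj' : j < j') (hj'n : j' ≤ n) :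
    edgeRank n c i j ≠ edgeRank n c i j' := by
  have hsplit := offColorCount_eq_add (c := c) (i := i) hjj'.le hj'n
  set e := #{l ∈ Ioc j j' | c i l ≠ c i n}
  unfold edgeRank
  by_cases hj' : c i j' = c i n
  · have he : e ≤ j' - j - 1 := by
      calc e ≤ #(Ioo j j') := card_le_card fun l hl => by
              simp only [mem_filter, mem_Ioc] at hl
              have : l ≠ j' := by rintro rfl; exact hl.2 hj'
              simp only [mem_Ioo]; omega
        _ = j' - j - 1 := Nat.card_Ioo j j'
    split_ifs <;> omega
  · have he : 1 ≤ e := card_pos.2 ⟨j', by simp [hjj', hj']⟩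
    split_ifs <;> omega

lemma edgeRank_injOn : Set.InjOn (edgeRank n c i) (Ioc i n) := by
  intro j hj j' hj' h
  simp only [coe_Ioc, Set.mem_Ioc] at hj hj'
  rcases lt_trichotomy j j' with hlt | heq | hgt
  · exact absurd h (edgeRank_ne hj.1 hlt hj'.2)
  · exact heq
  · exact absurd h.symm (edgeRank_ne hj'.1 hgt hj.2)

lemma edgeRank_lt (hij : i < j) (hjn : j ≤ n) : edgeRank n c i j < n - i := by
  have := offColorCount_le (n := n) (c := c) (i := i) (j := j)
  unfold edgeRank
  split_ifs <;> omega

lemma le_card_filter_edgeRank_le {K : ℕ} (hK : K < n - i) :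
    K + 1 ≤ #{j ∈ Ioc i n | edgeRank n c i j ≤ K} := by
  have hlarge : #{j ∈ Ioc i n | ¬edgeRank n c i j ≤ K} ≤ #(Ioo K (n - i)) :=
    card_le_card_of_injOn _
      (fun j hj => by
        simp only [coe_filter, mem_Ioc, Set.mem_ofPred_eq] at hj
        simpa using ⟨not_le.1 hj.2, edgeRank_lt hj.1.1 hj.1.2⟩)
      (edgeRank_injOn.mono fun j hj => (mem_filter.1 hj).1)
  have htotal := card_filter_add_card_filter_not (s := Ioc i n) (edgeRank n c i · ≤ K)
  rw [Nat.card_Ioc] at htotal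
  rw [Nat.card_Ioo] at hlarge
  omega

lemma sDeg_succ {m : ℕ} (hjm : j ≤ m) :
    sDeg (m + 1) c i j = sDeg m c i j + if c i (m + 1) = c i j then 1 else 0 := by
  unfold sDeg
  rw [← insert_Ioc_right_eq_Ioc_add_one hjm, filter_insert]
  split_ifs with h
  · rw [card_insert_of_notMem (by simp), add_assoc]
  · rw [add_zero]

lemma sDeg_le_edgeRank (hcol : c i j ≠ c i n) :
    sDeg n c i j ≤ i - 1 + edgeRank n c i j := by
  have ha : #{l ∈ Ico 1 i | c l j = c i j} ≤ i - 1 :=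
    (card_filter_le _ _).trans (Nat.card_Ico 1 i).le
  have hb : #{l ∈ Ioc j n | c i l = c i j} = offColorCount n c i j := by
    unfold offColorCount
    congr 1
    exact filter_congr fun l _ => by
      revert hcol; cases c i l <;> cases c i j <;> cases c i n <;> decide
  rw [edgeRank, if_neg hcol, sDeg, hb]
  omega

lemma sub_sDeg_le_edgeRank (hij : i < j) (hcol : c i j = c i n) :
    n - 2 - sDeg n c i j ≤ i - 1 + edgeRank n c i j := by
  have hb : #{l ∈ Ioc j n | c i l = c i j} + offColorCount n c i j = n - j := by
    rw [offColorCount, hcol, card_filter_add_card_filter_not, Nat.card_Ioc]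
  rw [edgeRank, if_pos hcol, sDeg]
  omega

lemma isInvariant_of_edgeRank_add_le {k : ℕ} (hk : 2 * k + 2 < n) (hi : 1 ≤ i) (hij : i < j)
    (hjn : j ≤ n) (hrank : edgeRank n c i j + i ≤ k + 1) :
    j ≤ n - 1 ∧ kVal n c i j = kVal (n - 1) c i j ∧ kVal n c i j ≤ k := by
  obtain ⟨m, rfl⟩ : ∃ m, n = m + 1 := ⟨n - 1, by omega⟩
  simp only [Nat.add_sub_cancel, kVal]
  by_cases hcol : c i j = c i (m + 1)
  · have hjm : j ≤ m := by
      have : j - i - 1 ≤ edgeRank (m + 1) c i j := by rw [edgeRank, if_pos hcol]; omega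
      omega
    have hs := sDeg_succ (c := c) (i := i) hjm
    have := sub_sDeg_le_edgeRank hij hcol
    rw [if_pos hcol.symm] at hs
    omega
  · have hjm : j ≤ m := by
      rcases hjn.lt_or_eq with h | rfl
      · omega
      · exact absurd rfl hcol
    have hs := sDeg_succ (c := c) (i := i) hjm
    have := sDeg_le_edgeRank hcol
    rw [if_neg (Ne.symm hcol)] at hs
    omega

lemma sum_range_sub_add_one (k : ℕ) : ∑ t ∈ range (k + 1), (k - t + 1) = (k + 2).choose 2 := by
  have hreflect := sum_range_reflect (fun t => t + 1) (k + 1)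
  simp only [Nat.add_sub_cancel] at hreflect
  rw [hreflect, Nat.choose_two_right, ← sum_range_id, sum_range_succ' _ (k + 1), add_zero]

end BookDrawing

open BookDrawing in
theorem invariant_leq_k_edges_lower_bound_general (n k : ℕ) (hk : 2 * k + 2 < n)
    (c : ℕ → ℕ → Bool) :
    (k + 2).choose 2 ≤ EleqInv n c k := by
  -- `⟨t, j⟩` stands for the edge `(t + 1, j)`
  set edges := (range (k + 1)).sigma fun t => {j ∈ Ioc (t + 1) n | edgeRank n c (t + 1) j ≤ k - t}
  have hedges : (k + 2).choose 2 ≤ #edges := by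
    rw [card_sigma, ← sum_range_sub_add_one]
    exact sum_le_sum fun t ht => le_card_filter_edgeRank_le (by simp at ht; omega)
  refine hedges.trans (card_le_card_of_injOn (fun x => (x.1 + 1, x.2)) ?_ ?_)
  · rintro ⟨t, j⟩ hx
    simp only [edges, coe_sigma, Set.mem_sigma_iff, coe_range, Set.mem_Iio, coe_filter, mem_Ioc,
      Set.mem_ofPred_eq] at hx
    obtain ⟨ht, ⟨hij, hjn⟩, hrank⟩ := hx
    obtain ⟨hjn', hinv⟩ := isInvariant_of_edgeRank_add_le (c := c) hk (by omega) hij hjn (by omega)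
    simp only [coe_filter, mem_product, mem_Icc, Set.mem_ofPred_eq]
    exact ⟨⟨⟨by omega, by omega⟩, by omega, hjn'⟩, hij, hinv⟩
  · rintro ⟨t, j⟩ - ⟨t', j'⟩ - h
    simp only [Prod.mk.injEq, add_left_inj] at h
    obtain ⟨rfl, rfl⟩ := h
    rfl

/-- For `n ≥ 4` and `0 ≤ k < n/2 − 1`, `E_{≤k}(c,c₁) ≥ C(k+2,2)`,
where `c₁` is the restriction of `c` to the pairs with `j ≤ n−1`. -/
theorem invariant_leq_k_edges_lower_bound (n k : ℕ) (hn : 4 ≤ n) (hk : 2 * k + 2 < n)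
    (c : ℕ → ℕ → Bool) :
    (k + 2).choose 2 ≤ EleqInv n c k :=
  invariant_leq_k_edges_lower_bound_general n k hk c
end
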